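/- arXiv:1807.00406 — 2 statements merged into one kernel-verified Lean document; each statement's English description precedes it below -/
import Mathlib

section
/- The natural density of squarefree numbers is 6/π²: the quantity (#{n : 1 ≤ n ≤ N and n is squarefree})/N tends to 6/π² as N → ∞. -/
/-!
Möbius inversion gives `1_{squarefree}(n) = ∑_{d² ∣ n} μ(d)`, hence
`#{n ≤ N squarefree} = ∑_d μ(d) ⌊N / d²⌋`. After dividing by `N`, the `d`-th term tends to
`μ(d) / d²` and is bounded by `1 / d²`, so by dominated convergence for series (Tannery's theorem)
the density is `∑_d μ(d) / d² = 1 / ζ(2) = 6 / π²`.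
-/

open Filter Real Finset ArithmeticFunction
open scoped ArithmeticFunction.Moebius Topology

theorem Nat.dvd_of_sq_dvd_sq_mul_squarefree {a b d : ℕ} (ha : Squarefree a) (hb : b ≠ 0)
    (h : d ^ 2 ∣ b ^ 2 * a) : d ∣ b := by
  have hd : d ≠ 0 := by rintro rfl; simp_all [ha.ne_zero]
  rw [← Nat.factorization_le_iff_dvd hd hb]
  rw [← Nat.factorization_le_iff_dvd (by positivity) (by simp [hb, ha.ne_zero])] at h
  intro p
  have hp := h p
  have hap := ha.natFactorization_le_one p
  -- `2 v_p(d) ≤ 2 v_p(b) + v_p(a)` with `v_p(a) ≤ 1` forces `v_p(d) ≤ v_p(b)`.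
  simp only [Nat.factorization_mul (pow_ne_zero 2 hb) ha.ne_zero, Nat.factorization_pow,
    Finsupp.coe_add, Finsupp.coe_smul, Pi.add_apply, Pi.smul_apply, smul_eq_mul] at hp
  omega

namespace ArithmeticFunction

theorem sum_divisors_moebius (n : ℕ) : ∑ d ∈ n.divisors, μ d = if n = 1 then 1 else 0 := by
  have h := congrArg (· n) moebius_mul_coe_zeta
  simp only [coe_mul_zeta_apply, one_apply] at h
  exact h

theorem sum_divisors_filter_sq_dvd_moebius (n : ℕ) :
    ∑ d ∈ n.divisors with d ^ 2 ∣ n, μ d = if Squarefree n then 1 else 0 := by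
  rcases eq_or_ne n 0 with rfl | hn
  · simp
  obtain ⟨a, b, rfl, ha⟩ := Nat.sq_mul_squarefree n
  have hb : b ≠ 0 := by rintro rfl; simp at hn
  have hdivisors : {d ∈ (b ^ 2 * a).divisors | d ^ 2 ∣ b ^ 2 * a} = b.divisors := by
    ext d
    simp only [mem_filter, Nat.mem_divisors]
    constructor
    · rintro ⟨-, hd⟩
      exact ⟨Nat.dvd_of_sq_dvd_sq_mul_squarefree ha hb hd, hb⟩
    · rintro ⟨hd, -⟩
      have hd2 : d ^ 2 ∣ b ^ 2 * a := (pow_dvd_pow_of_dvd hd 2).mul_right a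
      exact ⟨⟨(dvd_pow_self d two_ne_zero).trans hd2, hn⟩, hd2⟩
  rw [hdivisors, sum_divisors_moebius]
  congr 1
  rw [eq_iff_iff]
  constructor
  · rintro rfl
    simpa using ha
  · intro hsq
    exact Nat.isUnit_iff.mp (hsq b ⟨a, by ring⟩)

theorem LSeries_moebius_eq_inv_riemannZeta {s : ℂ} (hs : 1 < s.re) :
    LSeries (fun n => μ n) s = (riemannZeta s)⁻¹ := by
  rw [← LSeries_one_eq_riemannZeta hs]
  exact eq_inv_of_mul_eq_one_right (LSeries_one_mul_Lseries_moebius hs)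

theorem tsum_moebius_div_sq : ∑' n : ℕ, (μ n : ℝ) / n ^ 2 = 6 / π ^ 2 := by
  have h := LSeries_moebius_eq_inv_riemannZeta (s := 2) (by norm_num)
  rw [riemannZeta_two, LSeries, inv_div] at h
  apply Complex.ofReal_injective
  push_cast
  rw [← h]
  congr 1 with n
  rcases eq_or_ne n 0 with rfl | hn
  · simp
  · simp [LSeries.term_of_ne_zero hn]

end ArithmeticFunction

theorem Nat.card_squarefree_Icc (N : ℕ) :
    (#{n ∈ Icc 1 N | Squarefree n} : ℤ) = ∑ d ∈ Icc 1 N, μ d * (N / d ^ 2 : ℕ) := by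
  calc (#{n ∈ Icc 1 N | Squarefree n} : ℤ)
      = ∑ n ∈ Icc 1 N, ∑ d ∈ n.divisors with d ^ 2 ∣ n, μ d := by
        simp only [sum_divisors_filter_sq_dvd_moebius, sum_boole]
    _ = ∑ d ∈ Icc 1 N, ∑ n ∈ Icc 1 N with d ^ 2 ∣ n, μ d := by
        refine sum_comm' fun n d => ?_
        simp only [mem_filter, mem_Icc, Nat.mem_divisors]
        constructor
        · rintro ⟨hn, ⟨hdn, -⟩, hd2⟩
          have := Nat.le_of_dvd (by omega) hdn
          have := Nat.pos_of_dvd_of_pos hdn (by omega)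
          exact ⟨⟨hn, hd2⟩, by omega, by omega⟩
        · rintro ⟨⟨hn, hd2⟩, -⟩
          exact ⟨hn, ⟨(dvd_pow_self d two_ne_zero).trans hd2, by omega⟩, hd2⟩
    _ = ∑ d ∈ Icc 1 N, μ d * (N / d ^ 2 : ℕ) := by
        refine sum_congr rfl fun d _ => ?_
        rw [sum_const, ← Nat.Ioc_filter_dvd_card_eq_div, nsmul_eq_mul, mul_comm]
        rfl

theorem Nat.card_squarefree_Icc_div_eq_tsum (N : ℕ) :
    (#{n ∈ Icc 1 N | Squarefree n} : ℝ) / N = ∑' d : ℕ, μ d * (((N / d ^ 2 : ℕ) : ℝ) / N) := by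
  rw [tsum_eq_sum (s := Icc 1 N)]
  · have h := congrArg (Int.cast : ℤ → ℝ) (Nat.card_squarefree_Icc N)
    simp only [Int.cast_natCast, Int.cast_sum, Int.cast_mul] at h
    simp only [h, sum_div, mul_div_assoc]
  · intro d hd
    rcases Nat.eq_zero_or_pos d with rfl | hd0
    · simp
    · have hNd : N < d := by
        rw [mem_Icc] at hd
        omega
      simp [Nat.div_eq_of_lt (hNd.trans_le (Nat.le_self_pow two_ne_zero d))]

theorem Nat.cast_div_div_le_one_div (N k : ℕ) : ((N / k : ℕ) : ℝ) / N ≤ 1 / k := by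
  rcases eq_or_ne N 0 with rfl | hN
  · simp
  calc ((N / k : ℕ) : ℝ) / N ≤ ((N : ℝ) / k) / N := by gcongr; exact Nat.cast_div_le
    _ = 1 / k := by field_simp

theorem tendsto_natCast_div_div_atTop (k : ℕ) :
    Tendsto (fun N : ℕ => ((N / k : ℕ) : ℝ) / N) atTop (𝓝 (1 / k)) := by
  rcases eq_or_ne k 0 with rfl | hk
  · simp
  have hfloor := (tendsto_nat_floor_div_atTop (R := ℝ)).comp
    (tendsto_natCast_atTop_atTop.atTop_div_const (by positivity : (0 : ℝ) < k))
  rw [← one_mul (1 / (k : ℝ))]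
  refine (hfloor.mul_const (1 / (k : ℝ))).congr' ?_
  filter_upwards [eventually_ne_atTop 0] with N hN
  simp only [Function.comp_apply, Nat.floor_div_eq_div]
  field_simp

theorem density_squarefree :
    Filter.Tendsto
      (fun N : ℕ =>
        (((Finset.Icc 1 N).filter (fun n => Squarefree n)).card : ℝ) / (N : ℝ))
      Filter.atTop (nhds (6 / Real.pi ^ 2)) := by
  have hlimit : ∑' d : ℕ, (μ d : ℝ) / d ^ 2 = ∑' d : ℕ, μ d * (1 / ((d ^ 2 : ℕ) : ℝ)) := by
    push_cast
    simp only [mul_one_div]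
  have hbound (N d : ℕ) : ‖(μ d : ℝ) * (((N / d ^ 2 : ℕ) : ℝ) / N)‖ ≤ 1 / (d : ℝ) ^ 2 := by
    have hquot := Nat.cast_div_div_le_one_div N (d ^ 2)
    have hmu : |(μ d : ℝ)| ≤ 1 := by exact_mod_cast abs_moebius_le_one
    push_cast at hquot
    rw [norm_mul, Real.norm_eq_abs, Real.norm_of_nonneg (by positivity),
      ← one_mul (1 / (d : ℝ) ^ 2)]
    exact mul_le_mul hmu hquot (by positivity) zero_le_one
  rw [← tsum_moebius_div_sq, hlimit]
  simp only [Nat.card_squarefree_Icc_div_eq_tsum]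
  exact tendsto_tsum_of_dominated_convergence (Real.summable_one_div_nat_pow.mpr one_lt_two)
    (fun d => (tendsto_natCast_div_div_atTop (d ^ 2)).const_mul _) (.of_forall hbound)
end

section
/- The natural density of squarefree numbers coprime to 6 is 3/π²: the quantity (#{n : 1 ≤ n ≤ N, n is squarefree and gcd(n, 6) = 1})/N tends to 3/π² as N → ∞. -/
/-!
Write the indicator of a squarefree `n` as `∑_{d² ∣ n} μ(d)` and swap the sums: the number of
squarefree `n ≤ N` coprime to `q` becomes `∑_{d ≤ √N, (d, q) = 1} μ(d) · C(N / d²)`, where `C(x)`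
counts the `k ≤ x` coprime to `q`. Coprimality to `q` is `q`-periodic, so
`C(x) = (φ(q) / q) x + O(φ(q))`, and the count divided by `N` is
`(φ(q) / q) ∑_{d ≤ √N, (d, q) = 1} μ(d) / d² + O(√N / N)`. The full series is `1 / L(2, χ₀)` for
the trivial character `χ₀` mod `q`, and `L(2, χ₀) = ζ(2) ∏_{p ∣ q} (1 - p⁻²)`. For `q = 6` the
density is `(1/3) · (6/π²) · (4/3) · (9/8) = 3/π²`.
-/

open Filter Real Finset ArithmeticFunction
open scoped ArithmeticFunction.Moebius Nat Topology LSeries.notation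

def coprimeCount (q x : ℕ) : ℕ := #{k ∈ Icc 1 x | k.Coprime q}

lemma coprimeCount_add_self (q x : ℕ) : coprimeCount q (x + q) = coprimeCount q x + φ q := by
  have hsplit : Icc 1 (x + q) = Icc 1 x ∪ Ico (x + 1) (x + 1 + q) := by
    ext k; simp only [mem_union, mem_Icc, mem_Ico]; omega
  have hdisj : Disjoint (Icc 1 x) (Ico (x + 1) (x + 1 + q)) := by
    rw [Finset.disjoint_left]; intro k; simp only [mem_Icc, mem_Ico]; omega
  rw [coprimeCount, coprimeCount, hsplit, filter_union,
    card_union_of_disjoint (disjoint_filter_filter hdisj),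
    ← Nat.filter_coprime_Ico_eq_totient q (x + 1)]
  simp only [Nat.coprime_comm]

lemma abs_coprimeCount_sub_le (q x : ℕ) [NeZero q] :
    |(coprimeCount q x : ℝ) - φ q * x / q| ≤ φ q := by
  set E : ℕ → ℝ := fun x => coprimeCount q x - φ q * x / q
  have hq : (q : ℝ) ≠ 0 := by exact_mod_cast NeZero.ne q
  have hE : Function.Periodic E q := fun x => by
    simp only [E, coprimeCount_add_self]; push_cast; field_simp; ring
  change |E x| ≤ φ q
  rw [← hE.map_mod_nat x]
  have hr : x % q ≤ q := (Nat.mod_lt x (NeZero.pos q)).le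
  have hC : coprimeCount q (x % q) ≤ φ q := by
    calc coprimeCount q (x % q) ≤ coprimeCount q (0 + q) :=
          card_le_card (filter_subset_filter _ (Icc_subset_Icc_right (by omega)))
      _ = φ q := by rw [coprimeCount_add_self]; simp [coprimeCount]
  refine abs_sub_le_of_nonneg_of_le (by positivity) (by exact_mod_cast hC) (by positivity) ?_
  rw [div_le_iff₀ (by positivity)]
  gcongr

lemma abs_coprimeCount_div_sub_le (q N m : ℕ) [NeZero q] :
    |(coprimeCount q (N / m) : ℝ) - φ q / q * (N / m)| ≤ φ q + 1 := by
  have hfloor : ⌊(N : ℝ) / m⌋₊ = N / m := Nat.floor_div_eq_div N m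
  have hlow : ((N / m : ℕ) : ℝ) ≤ N / m := hfloor ▸ Nat.floor_le (by positivity)
  have hup : (N : ℝ) / m < (N / m : ℕ) + 1 := hfloor ▸ Nat.lt_floor_add_one _
  have hc : (φ q : ℝ) / q ≤ 1 :=
    div_le_one_of_le₀ (by exact_mod_cast Nat.totient_le q) (Nat.cast_nonneg q)
  have hfrac : |(φ q : ℝ) / q * (N / m - (N / m : ℕ))| ≤ 1 := by
    rw [abs_of_nonneg (by have := sub_nonneg.2 hlow; positivity)]
    exact mul_le_one₀ hc (sub_nonneg.2 hlow) (by linarith)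
  calc |(coprimeCount q (N / m) : ℝ) - φ q / q * (N / m)|
      = |((coprimeCount q (N / m) : ℝ) - φ q * (N / m : ℕ) / q) -
          φ q / q * (N / m - (N / m : ℕ))| := by ring_nf
    _ ≤ φ q + 1 := (abs_sub _ _).trans (add_le_add (abs_coprimeCount_sub_le q (N / m)) hfrac)

lemma card_filter_coprime_dvd (q N : ℕ) {m : ℕ} (hm : m ≠ 0) :
    #{n ∈ Icc 1 N | n.Coprime q ∧ m ∣ n} = if m.Coprime q then coprimeCount q (N / m) else 0 := by
  split_ifs with hmq
  · have himage : {n ∈ Icc 1 N | n.Coprime q ∧ m ∣ n} =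
        image (m * ·) {k ∈ Icc 1 (N / m) | k.Coprime q} := by
      ext n
      simp only [mem_filter, mem_Icc, mem_image]
      constructor
      · rintro ⟨⟨h1, hN⟩, hcop, k, rfl⟩
        refine ⟨k, ⟨⟨Nat.pos_of_ne_zero (by rintro rfl; simp at h1), ?_⟩, hcop.coprime_mul_left⟩, rfl⟩
        exact (Nat.le_div_iff_mul_le (Nat.pos_of_ne_zero hm)).2 (by linarith)
      · rintro ⟨k, ⟨⟨hk, hkN⟩, hcop⟩, rfl⟩
        refine ⟨⟨Nat.one_le_iff_ne_zero.2 (by positivity), ?_⟩, hmq.mul_left hcop, dvd_mul_right m k⟩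
        exact (Nat.mul_le_mul_left m hkN).trans (Nat.mul_div_le N m)
    rw [himage, card_image_of_injective _ (mul_right_injective₀ hm), coprimeCount]
  · rw [card_eq_zero, filter_eq_empty_iff]
    rintro n - ⟨hcop, hdvd⟩
    exact hmq (hcop.coprime_dvd_left hdvd)

lemma squarefree_iff_floorRoot_two_eq_one (n : ℕ) : Squarefree n ↔ Nat.floorRoot 2 n = 1 := by
  simp only [Squarefree, Nat.isUnit_iff, ← sq, Nat.pow_dvd_iff_dvd_floorRoot]
  exact ⟨fun h => h _ dvd_rfl, fun h d hd => Nat.dvd_one.1 (h ▸ hd)⟩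

lemma sum_moebius_sq_dvd_eq_ite_squarefree {n N : ℕ} (hn : n ≠ 0) (hnN : n ≤ N) :
    ∑ d ∈ range (N.sqrt + 1) with d ^ 2 ∣ n, μ d = if Squarefree n then 1 else 0 := by
  have hdiv : {d ∈ range (N.sqrt + 1) | d ^ 2 ∣ n} = (Nat.floorRoot 2 n).divisors := by
    ext d
    simp only [mem_filter, mem_range, Nat.mem_divisors, ← Nat.pow_dvd_iff_dvd_floorRoot,
      Nat.floorRoot_ne_zero, ne_eq, OfNat.ofNat_ne_zero, not_false_eq_true, hn, and_self, and_true]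
    refine ⟨And.right, fun hd => ⟨Nat.lt_succ_of_le (Nat.le_sqrt'.2 ?_), hd⟩⟩
    exact (Nat.le_of_dvd (Nat.pos_of_ne_zero hn) hd).trans hnN
  simp only [hdiv, ← coe_mul_zeta_apply, moebius_mul_coe_zeta, one_apply,
    squarefree_iff_floorRoot_two_eq_one]

lemma card_squarefree_coprime_eq_sum (q N : ℕ) :
    (#{n ∈ Icc 1 N | Squarefree n ∧ n.Coprime q} : ℤ) =
      ∑ d ∈ range (N.sqrt + 1), if d.Coprime q then μ d * coprimeCount q (N / d ^ 2) else 0 := by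
  calc (#{n ∈ Icc 1 N | Squarefree n ∧ n.Coprime q} : ℤ)
      = ∑ n ∈ Icc 1 N with n.Coprime q, if Squarefree n then 1 else 0 := by
        rw [← natCast_card_filter, filter_filter]; simp only [and_comm]
    _ = ∑ n ∈ Icc 1 N with n.Coprime q, ∑ d ∈ range (N.sqrt + 1) with d ^ 2 ∣ n, μ d := by
        refine sum_congr rfl fun n hn => ?_
        simp only [mem_filter, mem_Icc] at hn
        rw [sum_moebius_sq_dvd_eq_ite_squarefree (by omega) hn.1.2]
    _ = ∑ d ∈ range (N.sqrt + 1), μ d * #{n ∈ Icc 1 N | n.Coprime q ∧ d ^ 2 ∣ n} := by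
        rw [sum_comm' (t' := range (N.sqrt + 1))
          (s' := fun d => {n ∈ Icc 1 N | n.Coprime q ∧ d ^ 2 ∣ n}) (fun n d => by
            simp only [mem_filter]; tauto)]
        simp only [sum_const, nsmul_eq_mul, mul_comm]
    _ = _ := by
        refine sum_congr rfl fun d _ => ?_
        rcases eq_or_ne d 0 with rfl | hd
        · simp
        simp only [card_filter_coprime_dvd q N (pow_ne_zero 2 hd), Nat.coprime_pow_left_iff two_pos]
        split_ifs <;> simp

lemma hasSum_moebius_div_sq_coprime (q : ℕ) [NeZero q] :
    HasSum (fun d : ℕ => if d.Coprime q then (μ d : ℝ) / d ^ 2 else 0)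
      (π ^ 2 / 6 * ∏ p ∈ q.primeFactors, (1 - ((p : ℝ) ^ 2)⁻¹))⁻¹ := by
  let χ : DirichletCharacter ℂ q := 1
  have hs : 1 < (2 : ℂ).re := by norm_num
  have hχ : L ↗χ 2 = ((π ^ 2 / 6 * ∏ p ∈ q.primeFactors, (1 - ((p : ℝ) ^ 2)⁻¹) : ℝ) : ℂ) := by
    rw [← DirichletCharacter.LFunction_eq_LSeries χ hs]
    refine (DirichletCharacter.LFunctionTrivChar_eq_mul_riemannZeta (by norm_num)).trans ?_
    rw [riemannZeta_two]
    push_cast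
    simp only [Complex.cpow_neg, Complex.cpow_ofNat]
    ring
  have hsum := (DirichletCharacter.LSeriesSummable_mul χ
    (LSeriesSummable_moebius_iff.2 hs)).LSeriesHasSum
  rw [eq_inv_of_mul_eq_one_right (DirichletCharacter.LSeries.mul_mu_eq_one χ hs), hχ,
    ← Complex.ofReal_inv] at hsum
  refine Complex.hasSum_ofReal.1 (hsum.congr_fun fun d => ?_)
  rcases eq_or_ne d 0 with rfl | hd
  · simp
  rw [LSeries.term_of_ne_zero hd, Pi.mul_apply]
  by_cases hu : IsUnit (d : ZMod q)
  · rw [if_pos ((ZMod.isUnit_iff_coprime d q).1 hu)]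
    simp [χ, MulChar.one_apply hu]
  · rw [if_neg (mt (ZMod.isUnit_iff_coprime d q).2 hu)]
    simp [χ, MulChar.map_nonunit _ hu]

lemma Nat.tendsto_sqrt_atTop : Tendsto Nat.sqrt atTop atTop :=
  tendsto_atTop_atTop.2 fun b => ⟨b ^ 2, fun _ h => Nat.le_sqrt'.2 h⟩

lemma tendsto_sqrt_succ_div_atTop :
    Tendsto (fun N : ℕ => ((N.sqrt : ℝ) + 1) / N) atTop (𝓝 0) := by
  refine squeeze_zero' (.of_forall fun N => by positivity) ?_
    ((tendsto_const_div_atTop_nhds_zero_nat (2 : ℝ)).comp Nat.tendsto_sqrt_atTop)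
  filter_upwards [eventually_ge_atTop 1] with N hN
  have hs : (1 : ℝ) ≤ N.sqrt := by exact_mod_cast Nat.sqrt_pos.2 hN
  have hsN : (N.sqrt : ℝ) * N.sqrt ≤ N := by exact_mod_cast Nat.sqrt_le N
  rw [Function.comp_apply, div_le_div_iff₀ (by positivity) (by positivity)]
  nlinarith

lemma abs_moebius_mul_coprimeCount_div_sub_le (q : ℕ) [NeZero q] {N : ℕ} (hN : 0 < N) (d : ℕ) :
    |(μ d : ℝ) * coprimeCount q (N / d ^ 2) / N - φ q / q * ((μ d : ℝ) / d ^ 2)| ≤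
      ((φ q : ℝ) + 1) / N := by
  have hsplit : (μ d : ℝ) * coprimeCount q (N / d ^ 2) / N - φ q / q * ((μ d : ℝ) / d ^ 2) =
      μ d * (coprimeCount q (N / d ^ 2) - φ q / q * (N / (d ^ 2 : ℕ))) / N := by
    have : (N : ℝ) ≠ 0 := by positivity
    push_cast
    field_simp
  calc _ = |(μ d : ℝ)| * |(coprimeCount q (N / d ^ 2) : ℝ) - φ q / q * (N / (d ^ 2 : ℕ))| / N := by
        rw [hsplit, abs_div, abs_mul, Nat.abs_cast]
    _ ≤ 1 * (φ q + 1) / N := by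
        gcongr
        · exact_mod_cast abs_moebius_le_one
        · exact abs_coprimeCount_div_sub_le q N (d ^ 2)
    _ = _ := by rw [one_mul]

lemma abs_card_squarefree_coprime_div_sub_le (q : ℕ) [NeZero q] {N : ℕ} (hN : 0 < N) :
    |(#{n ∈ Icc 1 N | Squarefree n ∧ n.Coprime q} : ℝ) / N -
        φ q / q * ∑ d ∈ range (N.sqrt + 1), (if d.Coprime q then (μ d : ℝ) / d ^ 2 else 0)| ≤
      (φ q + 1) * ((N.sqrt + 1) / N) := by
  have hcount : (#{n ∈ Icc 1 N | Squarefree n ∧ n.Coprime q} : ℝ) =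
      ∑ d ∈ range (N.sqrt + 1),
        if d.Coprime q then (μ d : ℝ) * coprimeCount q (N / d ^ 2) else 0 := by
    exact_mod_cast congrArg (Int.cast : ℤ → ℝ) (card_squarefree_coprime_eq_sum q N)
  have hterm (d : ℕ) :
      |(if d.Coprime q then (μ d : ℝ) * coprimeCount q (N / d ^ 2) else 0) / N -
        φ q / q * (if d.Coprime q then (μ d : ℝ) / d ^ 2 else 0)| ≤ ((φ q : ℝ) + 1) / N := by
    split_ifs
    · exact abs_moebius_mul_coprimeCount_div_sub_le q hN d
    · simp only [zero_div, mul_zero, sub_zero, abs_zero]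
      positivity
  rw [hcount, sum_div, mul_sum, ← sum_sub_distrib]
  calc _ ≤ ∑ d ∈ range (N.sqrt + 1), ((φ q : ℝ) + 1) / N :=
        (abs_sum_le_sum_abs _ _).trans (sum_le_sum fun d _ => hterm d)
    _ = _ := by
        rw [sum_const, card_range, nsmul_eq_mul]
        push_cast
        ring

theorem tendsto_card_squarefree_coprime_div (q : ℕ) [NeZero q] :
    Tendsto (fun N : ℕ => (#{n ∈ Icc 1 N | Squarefree n ∧ n.Coprime q} : ℝ) / N) atTop
      (𝓝 (φ q / q * (π ^ 2 / 6 * ∏ p ∈ q.primeFactors, (1 - ((p : ℝ) ^ 2)⁻¹))⁻¹)) := by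
  have hmain := ((hasSum_moebius_div_sq_coprime q).tendsto_sum_nat.comp
    ((tendsto_add_atTop_nat 1).comp Nat.tendsto_sqrt_atTop)).const_mul (φ q / q : ℝ)
  refine tendsto_of_tendsto_of_dist hmain (squeeze_zero' (.of_forall fun N => dist_nonneg) ?_
    (by simpa using tendsto_sqrt_succ_div_atTop.const_mul ((φ q : ℝ) + 1)))
  filter_upwards [eventually_gt_atTop 0] with N hN
  rw [dist_comm, Real.dist_eq]
  exact abs_card_squarefree_coprime_div_sub_le q hN

theorem density_squarefree_coprime_six :
    Filter.Tendsto
      (fun N : ℕ =>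
        (((Finset.Icc 1 N).filter (fun n => Squarefree n ∧ Nat.gcd n 6 = 1)).card : ℝ)
          / (N : ℝ))
      Filter.atTop (nhds (3 / Real.pi ^ 2)) := by
  convert tendsto_card_squarefree_coprime_div 6 using 2
  rw [show Nat.primeFactors 6 = {2, 3} by simp [← Nat.toFinset_factors], show φ 6 = 2 by decide,
    prod_pair (by norm_num)]
  field_simp [pi_ne_zero]
  norm_num
end
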